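/- (Bellman optimality) Let π* be an optimal policy and S* the set of non-terminal states in its trajectory from Ω (i.e. in T_{Ω,t}^{π*} for 0 ≤ t ≤ τ_Ω^{π*} − 1). If a policy π satisfies V^π(l) = max_{a ∈ A(l)} Q^π(l, a) for every l ∈ S*, then π is optimal, i.e. V^π(Ω) = max_ρ V^ρ(Ω); moreover π(l) attains the maximum of a ↦ Q^π(l, a) over A(l) for every l ∈ S*. -/

import Mathlib

open Finset

/-- A branch: for each feature, either unused (`none`) or fixed to a category. -/
abbrev Branch (q : ℕ) (C : Fin q → ℕ) : Type := ∀ i : Fin q, Option (Fin (C i))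

/-- States: `Sum.inl l` is the (non-terminal) branch `l`, `Sum.inr l` is its terminal state `l̄`. -/
abbrev BState (q : ℕ) (C : Fin q → ℕ) : Type := Branch q C ⊕ Branch q C

/-- The root branch `Ω`. -/
def root (q : ℕ) (C : Fin q → ℕ) : Branch q C := fun _ => none

/-- The child of `l` obtained by fixing unused feature `i` to category `j`. -/
def child {q : ℕ} {C : Fin q → ℕ} (l : Branch q C) (i : Fin q) (j : Fin (C i)) : Branch q C :=
  Function.update l i (some j)

/-- `Children(l, i)`. -/
def childrenF {q : ℕ} {C : Fin q → ℕ} (l : Branch q C) (i : Fin q) : Finset (Branch q C) :=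
  Finset.univ.image (fun j : Fin (C i) => child l i j)

/-- A policy: `act l = none` is the terminal action `ā`, `act l = some i` splits on the
unused feature `i`. -/
structure Policy (q : ℕ) (C : Fin q → ℕ) where
  act : Branch q C → Option (Fin q)
  valid : ∀ l i, act l = some i → l i = none

/-- Transition set of the action taken by `π` at branch `l`. -/
def stepSet {q : ℕ} {C : Fin q → ℕ} (π : Policy q C) (l : Branch q C) : Finset (BState q C) :=
  match π.act l with
  | none => {Sum.inr l}
  | some i => (childrenF l i).image Sum.inl

/-- Trajectory of policy `π` from branch `l`. -/
def traj {q : ℕ} {C : Fin q → ℕ} (π : Policy q C) (l : Branch q C) : ℕ → Finset (BState q C)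
  | 0 => {Sum.inl l}
  | t + 1 => (traj π l t).biUnion
      (fun s => Sum.elim (fun lu => stepSet π lu) (fun lu => ({Sum.inr lu} : Finset (BState q C))) s)

/-- `τ_l^π`: minimal time `t ≥ 1` at which the trajectory consists of terminal states only. -/
noncomputable def tau {q : ℕ} {C : Fin q → ℕ} (π : Policy q C) (l : Branch q C) : ℕ :=
  sInf {t : ℕ | 1 ≤ t ∧ ∀ x ∈ traj π l t, x.isRight}

/-- A data point `x` is in branch `l`. -/
def inBranch {q : ℕ} {C : Fin q → ℕ} (l : Branch q C) (x : ∀ i : Fin q, Fin (C i)) : Prop :=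
  ∀ (i : Fin q) (c : Fin (C i)), l i = some c → x i = c

instance {q : ℕ} {C : Fin q → ℕ} (l : Branch q C) (x : ∀ i, Fin (C i)) :
    Decidable (inBranch l x) := by unfold inBranch; infer_instance

/-- `n(l)`: number of data points in `l`. -/
def nIn {q K : ℕ} {C : Fin q → ℕ} (D : Multiset ((∀ i : Fin q, Fin (C i)) × Fin K))
    (l : Branch q C) : ℕ :=
  (D.filter (fun p => inBranch l p.1)).card

/-- `n_k(l)`: number of data points in `l` of class `k`. -/
def nk {q K : ℕ} {C : Fin q → ℕ} (D : Multiset ((∀ i : Fin q, Fin (C i)) × Fin K))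
    (l : Branch q C) (k : Fin K) : ℕ :=
  (D.filter (fun p => inBranch l p.1 ∧ p.2 = k)).card

/-- `H(l) = (max_k n_k(l)) / n`. -/
noncomputable def Hb {q K : ℕ} {C : Fin q → ℕ} (D : Multiset ((∀ i : Fin q, Fin (C i)) × Fin K))
    (l : Branch q C) : ℝ :=
  ((Finset.univ.sup (fun k : Fin K => nk D l k) : ℕ) : ℝ) / (Multiset.card D : ℝ)

/-- Reward collected at a state of the trajectory: `H(l)` for the terminal action,
`-λ` for a split action, `0` at terminal states. -/
noncomputable def rew {q K : ℕ} {C : Fin q → ℕ}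
    (D : Multiset ((∀ i : Fin q, Fin (C i)) × Fin K)) (lam : ℝ) (π : Policy q C) :
    BState q C → ℝ
  | Sum.inl lu => match π.act lu with
      | none => Hb D lu
      | some _ => -lam
  | Sum.inr _ => 0

/-- Value `V^π(l)`. -/
noncomputable def V {q K : ℕ} {C : Fin q → ℕ}
    (D : Multiset ((∀ i : Fin q, Fin (C i)) × Fin K)) (lam : ℝ)
    (π : Policy q C) (l : Branch q C) : ℝ :=
  ∑ t ∈ Finset.range (tau π l), ∑ x ∈ traj π l t, rew D lam π x

/-- State-action value `Q^π(l, a)`. -/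
noncomputable def Qv {q K : ℕ} {C : Fin q → ℕ}
    (D : Multiset ((∀ i : Fin q, Fin (C i)) × Fin K)) (lam : ℝ)
    (π : Policy q C) (l : Branch q C) : Option (Fin q) → ℝ
  | none => Hb D l
  | some i => -lam + ∑ j : Fin (C i), V D lam π (child l i j)

/-- The available actions `A(l)`. -/
def Avail {q : ℕ} {C : Fin q → ℕ} (l : Branch q C) : Finset (Option (Fin q)) :=
  insert none ((Finset.univ.filter (fun i : Fin q => l i = none)).image some)

theorem Avail_nonempty {q : ℕ} {C : Fin q → ℕ} (l : Branch q C) : (Avail l).Nonempty :=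
  ⟨none, Finset.mem_insert_self _ _⟩

/-- The sub-DT of `π` rooted in `l`: the branches whose terminal states constitute
the trajectory at time `τ_l^π`. -/
noncomputable def subDTof {q : ℕ} {C : Fin q → ℕ} (π : Policy q C) (l : Branch q C) : Finset (Branch q C) :=
  (traj π l (tau π l)).image (Sum.elim id id)

/-- `SubDT l T m`: `T` is a sub-DT rooted in `l` obtained by `m` split operations. -/
inductive SubDT {q : ℕ} {C : Fin q → ℕ} : Branch q C → Finset (Branch q C) → ℕ → Prop
  | leaf (l : Branch q C) : SubDT l {l} 0
  | split (l : Branch q C) (T : Finset (Branch q C)) (m : ℕ) (l' : Branch q C) (i : Fin q)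
      (hT : SubDT l T m) (hmem : l' ∈ T) (hnone : l' i = none) :
      SubDT l (T.erase l' ∪ childrenF l' i) (m + 1)

/-- `H(T) = ∑_{l ∈ T} H(l)`. -/
noncomputable def HT {q K : ℕ} {C : Fin q → ℕ}
    (D : Multiset ((∀ i : Fin q, Fin (C i)) × Fin K)) (T : Finset (Branch q C)) : ℝ :=
  ∑ l ∈ T, Hb D l

/-- `splits(l)`: number of features used by branch `l`. -/
def nsplits {q : ℕ} {C : Fin q → ℕ} (l : Branch q C) : ℕ :=
  (Finset.univ.filter (fun i : Fin q => l i ≠ none)).card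

/-! Both `V^π` and `V^{π*}` obey the one-step recursion `V^ρ(l) = Q^ρ(l, ρ(l))`. Backward induction
along the trajectory of `π*`, from its leaves up to `Ω`, then gives `V^{π*}(l) ≤ V^π(l)` at every
branch `l` it visits: where `π*` splits on `i`,
`V^{π*}(l) = -λ + ∑_j V^{π*}(l[i ↦ j]) ≤ -λ + ∑_j V^π(l[i ↦ j]) = Q^π(l, i) ≤ V^π(l)`,
the last step being the Bellman hypothesis at `l`. So `π` is optimal, and `π(l)` attains the maximum
since `Q^π(l, π(l)) = V^π(l)`. The induction terminates because every split fixes a new feature. -/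

section Trajectory

variable {q : ℕ} {C : Fin q → ℕ}

lemma child_apply_self (l : Branch q C) (i : Fin q) (j : Fin (C i)) :
    child l i j i = some j := by
  simp [child]

lemma nsplits_le (l : Branch q C) : nsplits l ≤ q :=
  (card_filter_le _ _).trans_eq (card_fin q)

lemma nsplits_child {l : Branch q C} {i : Fin q} (h : l i = none) (j : Fin (C i)) :
    nsplits (child l i j) = nsplits l + 1 := by
  have hfeat : univ.filter (fun i' => child l i j i' ≠ none) =
      insert i (univ.filter fun i' => l i' ≠ none) := by
    ext i'
    by_cases hi' : i' = i
    · subst hi'; simp [child_apply_self]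
    · rw [mem_filter, mem_insert, mem_filter, child, Function.update_of_ne hi']
      simp [hi']
  rw [nsplits, hfeat, card_insert_of_notMem (by simp [h]), nsplits]

lemma mem_stepSet_inl {π : Policy q C} {l l' : Branch q C} :
    Sum.inl l' ∈ stepSet π l ↔ ∃ i, π.act l = some i ∧ ∃ j, child l i j = l' := by
  unfold stepSet
  split <;> simp_all [childrenF]

lemma mem_traj_succ_inl {π : Policy q C} {l l' : Branch q C} {t : ℕ} :
    Sum.inl l' ∈ traj π l (t + 1) ↔ ∃ l₀, Sum.inl l₀ ∈ traj π l t ∧ Sum.inl l' ∈ stepSet π l₀ := by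
  simp [traj]

/-- Each step of a trajectory fixes one more feature, so no branch survives past time `q`. -/
lemma nsplits_add_le_of_mem_traj {π : Policy q C} {l l' : Branch q C} {t : ℕ}
    (h : Sum.inl l' ∈ traj π l t) : nsplits l + t ≤ nsplits l' := by
  induction t generalizing l' with
  | zero => simp_all [traj]
  | succ t ih =>
    obtain ⟨l₀, hl₀, hstep⟩ := mem_traj_succ_inl.1 h
    obtain ⟨i, hact, j, rfl⟩ := mem_stepSet_inl.1 hstep
    have := ih hl₀
    rw [nsplits_child (π.valid _ _ hact)]
    omega

lemma isRight_of_mem_traj_succ_q (π : Policy q C) (l : Branch q C) :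
    ∀ x ∈ traj π l (q + 1), x.isRight := by
  rintro (l' | l') hx
  · have := nsplits_add_le_of_mem_traj hx
    have := nsplits_le l'
    omega
  · rfl

lemma tau_le (π : Policy q C) (l : Branch q C) : tau π l ≤ q + 1 :=
  Nat.sInf_le ⟨by omega, isRight_of_mem_traj_succ_q π l⟩

lemma isRight_of_mem_traj_tau (π : Policy q C) (l : Branch q C) :
    ∀ x ∈ traj π l (tau π l), x.isRight :=
  (Nat.sInf_mem (⟨q + 1, by omega, isRight_of_mem_traj_succ_q π l⟩ :
    {t : ℕ | 1 ≤ t ∧ ∀ x ∈ traj π l t, x.isRight}.Nonempty)).2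

lemma traj_succ_eq_self {π : Policy q C} {l : Branch q C} {t : ℕ}
    (h : ∀ x ∈ traj π l t, x.isRight) : traj π l (t + 1) = traj π l t := by
  rw [traj]
  refine (biUnion_congr rfl fun x hx => ?_).trans (biUnion_singleton_eq_self (s := traj π l t))
  obtain ⟨l', rfl⟩ := Sum.isRight_iff.1 (h x hx)
  rfl

lemma isRight_of_mem_traj_of_le {π : Policy q C} {l : Branch q C} {t t' : ℕ} (htt' : t ≤ t')
    (h : ∀ x ∈ traj π l t, x.isRight) : ∀ x ∈ traj π l t', x.isRight := by
  induction t', htt' using Nat.le_induction with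
  | base => exact h
  | succ t' _ ih => rwa [traj_succ_eq_self ih]

lemma lt_tau_of_mem_traj {π : Policy q C} {l l' : Branch q C} {t : ℕ}
    (h : Sum.inl l' ∈ traj π l t) : t < tau π l := by
  by_contra! hle
  simpa using isRight_of_mem_traj_of_le hle (isRight_of_mem_traj_tau π l) _ h

lemma traj_succ_of_act_eq_none {π : Policy q C} {l : Branch q C} (h : π.act l = none) (t : ℕ) :
    traj π l (t + 1) = {Sum.inr l} := by
  induction t with
  | zero => simp [traj, stepSet, h]
  | succ t ih => rw [traj, ih]; rfl

lemma traj_succ_of_act_eq_some {π : Policy q C} {l : Branch q C} {i : Fin q}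
    (h : π.act l = some i) (t : ℕ) :
    traj π l (t + 1) = univ.biUnion fun j => traj π (child l i j) t := by
  induction t with
  | zero =>
    ext x
    simp [traj, stepSet, h, childrenF, eq_comm]
  | succ t ih =>
    rw [traj, ih, biUnion_biUnion]
    rfl

def Policy.Reaches (ρ : Policy q C) (l l' : Branch q C) : Prop :=
  ∃ t, Sum.inl l' ∈ traj ρ l t

lemma Policy.Reaches.of_child {ρ : Policy q C} {l l' : Branch q C} {i : Fin q}
    (hact : ρ.act l = some i) {j : Fin (C i)} (h : ρ.Reaches (child l i j) l') :
    ρ.Reaches l l' := by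
  obtain ⟨t, ht⟩ := h
  exact ⟨t + 1, traj_succ_of_act_eq_some hact t ▸ mem_biUnion.2 ⟨j, mem_univ j, ht⟩⟩

/-- Every state of the trajectory from `l` refines `l`. -/
lemma apply_of_mem_traj {π : Policy q C} {l : Branch q C} {t : ℕ} {x : BState q C}
    (hx : x ∈ traj π l t) {i : Fin q} {v : Fin (C i)} (hl : l i = some v) :
    Sum.elim id id x i = some v := by
  induction t generalizing x with
  | zero => simp_all [traj]
  | succ t ih =>
    obtain ⟨(l₀ | l₀), hl₀, hx⟩ := mem_biUnion.1 hx
    · have h₀ : l₀ i = some v := ih hl₀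
      change x ∈ stepSet π l₀ at hx
      unfold stepSet at hx
      split at hx
      · simp_all
      · rename_i i' hact
        obtain ⟨l', hl', rfl⟩ := mem_image.1 hx
        obtain ⟨j, -, rfl⟩ := mem_image.1 hl'
        have hi' : i ≠ i' := by
          rintro rfl
          simp [π.valid _ _ hact] at h₀
        simpa [child, Function.update_of_ne hi'] using h₀
    · rw [mem_singleton.1 hx]
      exact ih hl₀

lemma pairwiseDisjoint_traj_child (π : Policy q C) (l : Branch q C) (i : Fin q) (t : ℕ) :
    (↑(univ : Finset (Fin (C i))) : Set (Fin (C i))).PairwiseDisjoint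
      fun j => traj π (child l i j) t := by
  intro j _ j' _ hjj'
  refine disjoint_left.2 fun x hx hx' => hjj' ?_
  exact Option.some_injective _ <| (apply_of_mem_traj hx (child_apply_self l i j)).symm.trans
    (apply_of_mem_traj hx' (child_apply_self l i j'))

lemma none_mem_Avail (l : Branch q C) : none ∈ Avail l :=
  mem_insert_self _ _

lemma some_mem_Avail {l : Branch q C} {i : Fin q} (h : l i = none) : some i ∈ Avail l :=
  mem_insert_of_mem (mem_image_of_mem _ (mem_filter.2 ⟨mem_univ i, h⟩))

end Trajectory

section Value

variable {q K : ℕ} {C : Fin q → ℕ} (D : Multiset ((∀ i : Fin q, Fin (C i)) × Fin K)) (lam : ℝ)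

lemma V_eq_sum_range_of_tau_le (π : Policy q C) (l : Branch q C) {N : ℕ} (hN : tau π l ≤ N) :
    V D lam π l = ∑ t ∈ range N, ∑ x ∈ traj π l t, rew D lam π x := by
  refine sum_subset (range_subset_range.2 hN) fun t _ ht => sum_eq_zero fun x hx => ?_
  have hright := isRight_of_mem_traj_of_le (not_lt.1 (mem_range.not.1 ht))
    (isRight_of_mem_traj_tau π l) x hx
  obtain ⟨l', rfl⟩ := Sum.isRight_iff.1 hright
  rfl

lemma V_of_act_eq_none (π : Policy q C) {l : Branch q C} (h : π.act l = none) :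
    V D lam π l = Hb D l := by
  rw [V_eq_sum_range_of_tau_le D lam π l (tau_le π l), sum_range_succ']
  simp only [traj_succ_of_act_eq_none h]
  simp [rew, traj, h]

lemma V_of_act_eq_some (π : Policy q C) {l : Branch q C} {i : Fin q} (h : π.act l = some i) :
    V D lam π l = -lam + ∑ j, V D lam π (child l i j) := by
  rw [V_eq_sum_range_of_tau_le D lam π l (N := q + 2) (by linarith [tau_le π l]), sum_range_succ']
  simp only [traj_succ_of_act_eq_some h, sum_biUnion (pairwiseDisjoint_traj_child π l i _)]
  rw [sum_comm, add_comm]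
  simp only [V_eq_sum_range_of_tau_le D lam π _ (tau_le π _)]
  simp [traj, rew, h]

lemma V_eq_Qv_act (π : Policy q C) (l : Branch q C) : V D lam π l = Qv D lam π l (π.act l) := by
  cases h : π.act l with
  | none => exact V_of_act_eq_none D lam π h
  | some i => exact V_of_act_eq_some D lam π h

theorem V_le_V_of_forall_reaches (π ρ : Policy q C) (l : Branch q C)
    (h : ∀ l', ρ.Reaches l l' → ∀ a ∈ Avail l', Qv D lam π l' a ≤ V D lam π l') :
    V D lam ρ l ≤ V D lam π l := by
  have hl := h l ⟨0, mem_singleton_self _⟩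
  rw [V_eq_Qv_act D lam ρ]
  match hact : ρ.act l with
  | none => exact hl none (none_mem_Avail l)
  | some i =>
    have hi : l i = none := ρ.valid l i hact
    calc Qv D lam ρ l (some i) = -lam + ∑ j, V D lam ρ (child l i j) := rfl
      _ ≤ -lam + ∑ j, V D lam π (child l i j) := by
        gcongr with j
        exact V_le_V_of_forall_reaches π ρ (child l i j) fun l' hl' => h l' (hl'.of_child hact)
      _ = Qv D lam π l (some i) := rfl
      _ ≤ V D lam π l := hl _ (some_mem_Avail hi)
termination_by q - nsplits l
decreasing_by
  have := nsplits_le (child l i j)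
  rw [nsplits_child hi] at this ⊢
  omega

end Value

theorem bellman_optimality_general {q K : ℕ}
    {C : Fin q → ℕ}
    (D : Multiset ((∀ i : Fin q, Fin (C i)) × Fin K))
    (lam : ℝ)
    (πs : Policy q C)
    (hopt : ∀ π : Policy q C, V D lam π (root q C) ≤ V D lam πs (root q C))
    (π : Policy q C)
    (hbell : ∀ l : Branch q C,
      (∃ t < tau πs (root q C), Sum.inl l ∈ traj πs (root q C) t) →
      V D lam π l = (Avail l).sup' (Avail_nonempty l) (Qv D lam π l)) :
    (∀ ρ : Policy q C, V D lam ρ (root q C) ≤ V D lam π (root q C)) ∧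
    (∀ l : Branch q C,
      (∃ t < tau πs (root q C), Sum.inl l ∈ traj πs (root q C) t) →
      Qv D lam π l (π.act l) = (Avail l).sup' (Avail_nonempty l) (Qv D lam π l)) := by
  have hπs : V D lam πs (root q C) ≤ V D lam π (root q C) := by
    refine V_le_V_of_forall_reaches D lam π πs _ fun l ⟨t, ht⟩ a ha => ?_
    rw [hbell l ⟨t, lt_tau_of_mem_traj ht, ht⟩]
    exact le_sup' _ ha
  refine ⟨fun ρ => (hopt ρ).trans hπs, fun l hl => ?_⟩
  rw [← V_eq_Qv_act, hbell l hl]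

/-- **Bellman optimality.** If a policy `π` satisfies
`V^π(l) = max_{a ∈ A(l)} Q^π(l,a)` on the non-terminal states of the trajectory of an
optimal policy `πs` from the root, then `π` is optimal, and `π(l)` attains the
maximum of `Q^π(l, ·)` on those states. -/
theorem bellman_optimality {q K : ℕ} (hq : 2 ≤ q) (hK : 2 ≤ K)
    {C : Fin q → ℕ} (hC : ∀ i, 2 ≤ C i)
    (D : Multiset ((∀ i : Fin q, Fin (C i)) × Fin K)) (hD : D ≠ 0)
    (lam : ℝ) (hlam0 : 0 < lam) (hlam1 : lam < 1)
    (πs : Policy q C)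
    (hopt : ∀ π : Policy q C, V D lam π (root q C) ≤ V D lam πs (root q C))
    (π : Policy q C)
    (hbell : ∀ l : Branch q C,
      (∃ t < tau πs (root q C), Sum.inl l ∈ traj πs (root q C) t) →
      V D lam π l = (Avail l).sup' (Avail_nonempty l) (Qv D lam π l)) :
    (∀ ρ : Policy q C, V D lam ρ (root q C) ≤ V D lam π (root q C)) ∧
    (∀ l : Branch q C,
      (∃ t < tau πs (root q C), Sum.inl l ∈ traj πs (root q C) t) →
      Qv D lam π l (π.act l) = (Avail l).sup' (Avail_nonempty l) (Qv D lam π l)) :=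
  bellman_optimality_general D lam πs hopt π hbell
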